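/- arXiv:2101.00410 — 2 statements merged into one kernel-verified Lean document; each statement's English description precedes it below -/
import Mathlib

section
/- Let L be a complete enriched Lie algebra and x ∈ L. Then the centralizer C = { y ∈ L : [x,y] = 0 } satisfies C = lim_α C_α where C_α = { z ∈ L/I_α : [ρ_α x, z] = 0 }; consequently the subspace [x, L] is closed in L. -/
section EnrichedPre

variable {L : Type*} [LieRing L] [LieAlgebra ℚ L]

/-- `lcsIn A n` is the span of iterated Lie brackets of length `n+1` with entries in `A`
(so `lcsIn ⊤ (k-1)` is the `k`-th term `L^k` of the lower central series). -/
def lcsIn (A : Submodule ℚ L) : ℕ → Submodule ℚ L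
  | 0 => A
  | n + 1 => Submodule.span ℚ {z : L | ∃ x ∈ A, ∃ y ∈ lcsIn A n, ⁅x, y⁆ = z}

/-- The closure of a subspace `S` in an enriched Lie algebra `(L, {I α})`:
the set of limits of coherent families of elements of `S`, i.e. of those `x`
whose image in each `L ⧸ I α` lies in the image of `S`. -/
def encl {ι : Type*} (I : ι → LieIdeal ℚ L) (S : Submodule ℚ L) : Submodule ℚ L where
  carrier := {x : L | ∀ α, ∃ s ∈ S, x - s ∈ (I α : Submodule ℚ L)}
  add_mem' := by
    intro a b ha hb α
    obtain ⟨s, hs, h1⟩ := ha α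
    obtain ⟨t, ht, h2⟩ := hb α
    exact ⟨s + t, S.add_mem hs ht, by
      simpa [add_sub_add_comm] using Submodule.add_mem _ h1 h2⟩
  zero_mem' := fun α => ⟨0, S.zero_mem, by simp⟩
  smul_mem' := by
    intro c a ha α
    obtain ⟨s, hs, h1⟩ := ha α
    exact ⟨c • s, S.smul_mem c hs, by
      simpa [smul_sub] using Submodule.smul_mem _ c h1⟩

/-- `(L, {I α})` is an enriched Lie algebra: a directed family of ideals with
finite-dimensional nilpotent quotients and trivial intersection. -/
def IsEnriched {ι : Type*} (I : ι → LieIdeal ℚ L) : Prop :=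
  (∀ α β, ∃ γ, I γ ≤ I α ⊓ I β) ∧
  (∀ α, FiniteDimensional ℚ (L ⧸ I α)) ∧
  (∀ α, LieRing.IsNilpotent (L ⧸ I α)) ∧
  (⨅ α, I α) = ⊥

/-- Completeness of `(L, {I α})`: every coherent family in `lim_α L/I α`
(presented by compatible representatives) has a limit in `L`. -/
def IsCompleteWrt {ι : Type*} (I : ι → LieIdeal ℚ L) : Prop :=
  ∀ y : ι → L, (∀ α β, I β ≤ I α → y β - y α ∈ (I α : Submodule ℚ L)) →
    ∃ x : L, ∀ α, x - y α ∈ (I α : Submodule ℚ L)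

end EnrichedPre

/-!
If `y` lies in the closure of `[x, L]`, the fibres `{z | [x, z] ≡ y mod I α}` form an inverse
system of nonempty affine subspaces of the finite-dimensional spaces `L ⧸ I α`. By Zorn's lemma
and the descending chain condition on affine subspaces, such a system contains a minimal
subsystem; minimality forces the transition maps of that subsystem to be surjective and then each
of its members to be a single point. These points form a coherent family, whose limit `z ∈ L`
(completeness) satisfies `[x, z] ≡ y` modulo every `I α`, hence `[x, z] = y` because `⋂ I α = 0`.
The same intersection property makes the centralizer closed.
-/

namespace AffineSubspace

variable {R V : Type*} [Ring R] [AddCommGroup V] [Module R V]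

theorem le_direction_of_forall_add_mem {s : AffineSubspace R V} {J : Submodule R V}
    (hs : (s : Set V).Nonempty) (h : ∀ z ∈ s, ∀ j ∈ J, j + z ∈ s) : J ≤ s.direction := by
  obtain ⟨p, hp⟩ := hs
  intro j hj
  simpa using vsub_mem_direction (h p hp j hj) hp

def thicken (s : AffineSubspace R V) (J : Submodule R V) : AffineSubspace R V :=
  (s.map J.mkQ.toAffineMap).comap J.mkQ.toAffineMap

theorem mem_thicken {s : AffineSubspace R V} {J : Submodule R V} {z : V} :
    z ∈ s.thicken J ↔ ∃ a ∈ s, z - a ∈ J := by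
  simp only [thicken, mem_comap, mem_map, LinearMap.coe_toAffineMap, Submodule.mkQ_apply,
    Submodule.Quotient.eq]
  exact ⟨fun ⟨a, ha, h⟩ => ⟨a, ha, by simpa using J.neg_mem h⟩,
    fun ⟨a, ha, h⟩ => ⟨a, ha, by simpa using J.neg_mem h⟩⟩

theorem thicken_mono {s t : AffineSubspace R V} {J K : Submodule R V} (hst : s ≤ t) (hJK : J ≤ K) :
    s.thicken J ≤ t.thicken K := by
  intro z hz
  obtain ⟨a, ha, hza⟩ := mem_thicken.1 hz
  exact mem_thicken.2 ⟨a, hst ha, hJK hza⟩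

theorem le_thicken (s : AffineSubspace R V) (J : Submodule R V) : s ≤ s.thicken J :=
  fun z hz => mem_thicken.2 ⟨z, hz, by simp⟩

theorem thicken_eq_self {s : AffineSubspace R V} {J : Submodule R V} (h : J ≤ s.direction) :
    s.thicken J = s := by
  refine le_antisymm (fun z hz => ?_) (le_thicken s J)
  obtain ⟨a, ha, hza⟩ := mem_thicken.1 hz
  simpa using vadd_mem_of_mem_direction (h hza) ha

theorem nonempty_thicken {s : AffineSubspace R V} (J : Submodule R V)
    (hs : (s : Set V).Nonempty) : (s.thicken J : Set V).Nonempty :=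
  hs.mono (le_thicken s J)

theorem le_direction_thicken {s : AffineSubspace R V} (J : Submodule R V)
    (hs : (s : Set V).Nonempty) : J ≤ (s.thicken J).direction := by
  refine le_direction_of_forall_add_mem (nonempty_thicken J hs) fun z hz j hj => ?_
  obtain ⟨a, ha, hza⟩ := mem_thicken.1 hz
  exact mem_thicken.2 ⟨a, ha, by simpa [add_sub_assoc] using J.add_mem hj hza⟩

/-- A member of `𝒞` whose direction is minimal modulo `J` (it exists since `V ⧸ J` is artinian) is
the least member. -/
theorem exists_isLeast_of_directedOn (J : Submodule R V) [IsArtinian R (V ⧸ J)]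
    {𝒞 : Set (AffineSubspace R V)} (hne : 𝒞.Nonempty)
    (hmem : ∀ s ∈ 𝒞, (s : Set V).Nonempty ∧ J ≤ s.direction) (hdir : DirectedOn (· ≥ ·) 𝒞) :
    ∃ m, IsLeast 𝒞 m := by
  obtain ⟨_, ⟨m, hm𝒞, rfl⟩, hmin⟩ := IsArtinian.set_has_minimal
    ((fun s : AffineSubspace R V => s.direction.map J.mkQ) '' 𝒞) (hne.image _)
  refine ⟨m, hm𝒞, fun s hs => ?_⟩
  obtain ⟨c, hc𝒞, hcm, hcs⟩ := hdir m hm𝒞 s hs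
  have hcm_dir : c.direction ≤ m.direction := direction_le hcm
  have hmap : c.direction.map J.mkQ = m.direction.map J.mkQ :=
    (Submodule.map_mono hcm_dir).eq_of_not_lt (hmin _ ⟨c, hc𝒞, rfl⟩)
  have hdir_eq : c.direction = m.direction := by
    simpa [Submodule.comap_map_mkQ, sup_of_le_right (hmem c hc𝒞).2,
      sup_of_le_right (hmem m hm𝒞).2] using congrArg (Submodule.comap J.mkQ) hmap
  rw [← eq_of_direction_eq_of_nonempty_of_le hdir_eq (hmem c hc𝒞).1 hcm]
  exact hcs

end AffineSubspace

section CosetSystem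

open AffineSubspace

variable {R V ι : Type*} [Ring R] [AddCommGroup V] [Module R V]

/-- An inverse system of nonempty affine subspaces of the quotients `V ⧸ I α`, each represented by
its preimage `A α` in `V`. -/
structure IsCosetSystem (I : ι → Submodule R V) (A : ι → AffineSubspace R V) : Prop where
  nonempty : ∀ α, (A α : Set V).Nonempty
  le_direction : ∀ α, I α ≤ (A α).direction
  mono : ∀ ⦃α β⦄, I β ≤ I α → A β ≤ A α

variable {I : ι → Submodule R V} [∀ α, IsArtinian R (V ⧸ I α)]

theorem IsCosetSystem.exists_le_minimal {S : ι → AffineSubspace R V} (hS : IsCosetSystem I S) :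
    ∃ A ≤ S, Minimal (IsCosetSystem I) A := by
  refine @zorn_le_nonempty₀ (ι → AffineSubspace R V)ᵒᵈ _ {A | IsCosetSystem I A}
    (fun c hc hchain A₀ hA₀ => ?_) S hS
  have hleast : ∀ α, ∃ m, IsLeast ((fun A : (ι → AffineSubspace R V)ᵒᵈ => A α) '' c) m := by
    refine fun α => exists_isLeast_of_directedOn (I α) ⟨_, A₀, hA₀, rfl⟩ ?_ ?_
    · rintro _ ⟨A, hA, rfl⟩
      exact ⟨(hc hA).nonempty α, (hc hA).le_direction α⟩
    · rintro _ ⟨A, hA, rfl⟩ _ ⟨B, hB, rfl⟩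
      rcases hchain.total hA hB with h | h
      · exact ⟨B α, ⟨B, hB, rfl⟩, h α, le_rfl⟩
      · exact ⟨A α, ⟨A, hA, rfl⟩, le_rfl, h α⟩
  choose E hEc hEle using hleast
  refine ⟨E, ⟨fun α => ?_, fun α => ?_, fun α β hαβ => ?_⟩, fun A hA α => hEle α ⟨A, hA, rfl⟩⟩
  · obtain ⟨A, hA, hAE⟩ := hEc α
    exact hAE ▸ (hc hA).nonempty α
  · obtain ⟨A, hA, hAE⟩ := hEc α
    exact hAE ▸ (hc hA).le_direction α
  · obtain ⟨A, hA, hAE⟩ := hEc α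
    exact hAE ▸ (hEle β ⟨A, hA, rfl⟩).trans ((hc hA).mono hαβ)

namespace IsCosetSystem

/-- The thickenings `D δ + I γ` stabilise, as `δ` decreases, to a coset system below `A`, which
minimality forces to be `A` itself. -/
theorem le_thicken_of_minimal (hI : Directed (· ≥ ·) I) {A D : ι → AffineSubspace R V}
    (hA : Minimal (IsCosetSystem I) A) (hDA : D ≤ A) (hD : ∀ ⦃α β⦄, I β ≤ I α → D β ≤ D α)
    {α₀ : ι} (hD₀ : ∀ δ, I δ ≤ I α₀ → (D δ : Set V).Nonempty) {γ δ : ι}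
    (hδγ : I δ ≤ I γ) (hδα₀ : I δ ≤ I α₀) : A γ ≤ (D δ).thicken (I γ) := by
  have hleast : ∀ γ, ∃ m,
      IsLeast {t | ∃ δ, I δ ≤ I γ ∧ I δ ≤ I α₀ ∧ (D δ).thicken (I γ) = t} m := by
    refine fun γ => exists_isLeast_of_directedOn (I γ) ?_ ?_ ?_
    · obtain ⟨δ, hγδ, hα₀δ⟩ := hI γ α₀
      exact ⟨_, δ, hγδ, hα₀δ, rfl⟩
    · rintro _ ⟨δ, -, hδα₀, rfl⟩
      exact ⟨nonempty_thicken _ (hD₀ δ hδα₀), le_direction_thicken _ (hD₀ δ hδα₀)⟩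
    · rintro _ ⟨δ₁, h₁γ, h₁α₀, rfl⟩ _ ⟨δ₂, -, -, rfl⟩
      obtain ⟨δ₃, h₁, h₂⟩ := hI δ₁ δ₂
      exact ⟨_, ⟨δ₃, h₁.trans h₁γ, h₁.trans h₁α₀, rfl⟩,
        thicken_mono (hD h₁) le_rfl, thicken_mono (hD h₂) le_rfl⟩
  choose B hB hBle using hleast
  have hBA : B ≤ A := by
    intro γ
    obtain ⟨δ, hδγ, -, hδ⟩ := hB γ
    rw [← hδ, ← thicken_eq_self (hA.1.le_direction γ)]
    exact thicken_mono ((hDA δ).trans (hA.1.mono hδγ)) le_rfl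
  have hBsys : IsCosetSystem I B := by
    refine ⟨fun γ => ?_, fun γ => ?_, fun α β hαβ => ?_⟩
    · obtain ⟨δ, -, hδα₀, hδ⟩ := hB γ
      exact hδ ▸ nonempty_thicken _ (hD₀ δ hδα₀)
    · obtain ⟨δ, -, hδα₀, hδ⟩ := hB γ
      exact hδ ▸ le_direction_thicken _ (hD₀ δ hδα₀)
    · obtain ⟨δ, hδα, hδα₀, hδ⟩ := hB α
      obtain ⟨δ', hδδ', hβδ'⟩ := hI δ β
      rw [← hδ]
      exact (hBle β ⟨δ', hβδ', hδδ'.trans hδα₀, rfl⟩).trans (thicken_mono (hD hδδ') hαβ)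
  exact (hA.2 hBsys hBA γ).trans (hBle γ ⟨δ, hδγ, hδα₀, rfl⟩)

theorem le_thicken_self_of_minimal (hI : Directed (· ≥ ·) I) {A : ι → AffineSubspace R V}
    (hA : Minimal (IsCosetSystem I) A) {γ δ : ι} (hδγ : I δ ≤ I γ) :
    A γ ≤ (A δ).thicken (I γ) :=
  le_thicken_of_minimal hI hA le_rfl hA.1.mono (fun δ _ => hA.1.nonempty δ) hδγ le_rfl

theorem le_mk'_of_minimal (hI : Directed (· ≥ ·) I) {A : ι → AffineSubspace R V}
    (hA : Minimal (IsCosetSystem I) A) {α : ι} {a : V} (ha : a ∈ A α) :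
    A α ≤ mk' a (I α) := by
  have hD₀ : ∀ δ, I δ ≤ I α → ((A δ ⊓ mk' a (I α) : AffineSubspace R V) : Set V).Nonempty := by
    intro δ hδα
    obtain ⟨d, hd, had⟩ := mem_thicken.1 (le_thicken_self_of_minimal hI hA hδα ha)
    exact ⟨d, hd, mem_mk'.2 (by simpa using (I α).neg_mem had)⟩
  calc A α ≤ (A α ⊓ mk' a (I α)).thicken (I α) :=
        le_thicken_of_minimal hI hA (fun _ => inf_le_left)
          (fun _ _ h => inf_le_inf_right _ (hA.1.mono h)) hD₀ le_rfl le_rfl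
    _ ≤ (mk' a (I α)).thicken (I α) := thicken_mono inf_le_right le_rfl
    _ = mk' a (I α) := thicken_eq_self (direction_mk' a (I α)).ge

theorem exists_coherent (hI : Directed (· ≥ ·) I) {S : ι → AffineSubspace R V}
    (hS : IsCosetSystem I S) :
    ∃ a : ι → V, (∀ α, a α ∈ S α) ∧ ∀ ⦃α β⦄, I β ≤ I α → a β - a α ∈ I α := by
  obtain ⟨A, hAS, hA⟩ := hS.exists_le_minimal
  choose a ha using hA.1.nonempty
  refine ⟨a, fun α => hAS α (ha α), fun α β hαβ => ?_⟩
  simpa using mem_mk'.1 (le_mk'_of_minimal hI hA (ha α) (hA.1.mono hαβ (ha β)))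

end IsCosetSystem

end CosetSystem

section Enriched

open AffineSubspace

variable {ι L : Type*} [LieRing L] [LieAlgebra ℚ L] {I : ι → LieIdeal ℚ L}

theorem le_encl (S : Submodule ℚ L) : S ≤ encl I S :=
  fun y hy _ => ⟨y, hy, by simp⟩

theorem eq_zero_iff_forall_mem_of_iInf_eq_bot (hI : ⨅ α, I α = ⊥) {z : L} :
    z = 0 ↔ ∀ α, z ∈ I α := by
  rw [← LieSubmodule.mem_bot (R := ℚ) (L := L) z, ← hI, LieSubmodule.mem_iInf]

theorem encl_ker_eq (hI : ⨅ α, I α = ⊥) {f : L →ₗ[ℚ] L} (hf : ∀ α, ∀ z ∈ I α, f z ∈ I α) :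
    encl I (LinearMap.ker f) = LinearMap.ker f := by
  refine le_antisymm (fun y hy => ?_) (le_encl _)
  refine (eq_zero_iff_forall_mem_of_iInf_eq_bot hI).2 fun α => ?_
  obtain ⟨s, hs, hys⟩ := hy α
  simpa [LinearMap.mem_ker.1 hs] using hf α _ hys

theorem encl_range_eq (hdir : ∀ α β, ∃ γ, I γ ≤ I α ⊓ I β)
    (hfd : ∀ α, FiniteDimensional ℚ (L ⧸ I α)) (hI : ⨅ α, I α = ⊥) (hC : IsCompleteWrt I)
    {f : L →ₗ[ℚ] L} (hf : ∀ α, ∀ z ∈ I α, f z ∈ I α) :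
    encl I (LinearMap.range f) = LinearMap.range f := by
  refine le_antisymm (fun y hy => ?_) (le_encl _)
  let S : ι → AffineSubspace ℚ L := fun α => (mk' y (I α : Submodule ℚ L)).comap f.toAffineMap
  have hmemS : ∀ {α z}, z ∈ S α ↔ f z - y ∈ I α := by
    simp [S, mem_mk']
  have hne : ∀ α, (S α : Set L).Nonempty := fun α => by
    obtain ⟨_, ⟨t, rfl⟩, hyt⟩ := hy α
    exact ⟨t, hmemS.2 (by simpa using (I α).neg_mem hyt)⟩
  have hS : IsCosetSystem (fun α => (I α : Submodule ℚ L)) S := by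
    refine ⟨hne, fun α => ?_, fun α β hαβ z hz => ?_⟩
    · refine le_direction_of_forall_add_mem (hne α) fun z hz j hj => hmemS.2 ?_
      simpa [add_sub_assoc] using (I α).add_mem (hf α j hj) (hmemS.1 hz)
    · exact hmemS.2 (hαβ (hmemS.1 hz))
  have : ∀ α, IsArtinian ℚ (L ⧸ (I α : Submodule ℚ L)) := fun α =>
    have : FiniteDimensional ℚ (L ⧸ (I α : Submodule ℚ L)) := hfd α
    inferInstance
  obtain ⟨a, haS, ha⟩ := hS.exists_coherent fun α β =>
    (hdir α β).imp fun γ hγ => by simpa using hγ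
  obtain ⟨s, hs⟩ := hC a fun α β hαβ => ha hαβ
  refine ⟨s, sub_eq_zero.1 <| (eq_zero_iff_forall_mem_of_iInf_eq_bot hI).2 fun α => ?_⟩
  simpa using (I α).add_mem (hf α _ (hs α)) (hmemS.1 (haS α))

end Enriched

/-- In a complete enriched Lie algebra, for `x ∈ L` the centralizer
`C = {y | ⁅x,y⁆ = 0}` is the inverse limit of the centralizers `C_α ⊆ L/I_α`
(equivalently: `y ∈ C` iff `ρ_α y ∈ C_α` for all `α`, and `C` is closed);
consequently `[x, L]` is closed in `L`. -/
theorem stmt5 {ι L : Type*} [LieRing L] [LieAlgebra ℚ L]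
    (I : ι → LieIdeal ℚ L) (hE : IsEnriched I) (hC : IsCompleteWrt I) (x : L) :
    (∀ y : L, ⁅x, y⁆ = 0 ↔ ∀ α, ⁅x, y⁆ ∈ I α) ∧
    encl I (LinearMap.ker ((LieAlgebra.ad ℚ L) x)) = LinearMap.ker ((LieAlgebra.ad ℚ L) x) ∧
    encl I (LinearMap.range ((LieAlgebra.ad ℚ L) x)) =
      LinearMap.range ((LieAlgebra.ad ℚ L) x) := by
  obtain ⟨hdir, hfd, -, hI⟩ := hE
  have had : ∀ α, ∀ z ∈ I α, LieAlgebra.ad ℚ L x z ∈ I α := fun α _ hz => (I α).lie_mem hz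
  exact ⟨fun _ => eq_zero_iff_forall_mem_of_iInf_eq_bot hI, encl_ker_eq hI had,
    encl_range_eq hdir hfd hI hC had⟩
end

section
/- Let L be a complete enriched Lie algebra and E ⊆ L a sub Lie algebra such that E + L^{(2)} = L, where L^{(2)} is the closure of [L,L]. Then the closure of E equals L. -/
/-!
Fix an index `α`. The subspace `E + I_α` is a Lie subalgebra, and the hypothesis says that it
spans `L` together with `[L, L]`. Expanding brackets, a subalgebra `K` with `K + L¹ = L` satisfies
`K + Lⁿ = L` for every term `Lⁿ` of the lower central series. Since `L / I_α` is nilpotent, some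
`Lⁿ` lies in `I_α`, hence `E + I_α = L`. As this holds for every `α`, the closure of `E` is `L`.
-/

open LieModule

namespace LieSubalgebra

variable {R L : Type*} [CommRing R] [LieRing L] [LieAlgebra R L]

lemma lie_mem_sup_lieIdeal (K : LieSubalgebra R L) (J : LieIdeal R L) {x y : L}
    (hx : x ∈ K.toSubmodule ⊔ (J : Submodule R L))
    (hy : y ∈ K.toSubmodule ⊔ (J : Submodule R L)) :
    ⁅x, y⁆ ∈ K.toSubmodule ⊔ (J : Submodule R L) := by
  obtain ⟨k₁, hk₁, j₁, hj₁, rfl⟩ := Submodule.mem_sup.1 hx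
  obtain ⟨k₂, hk₂, j₂, hj₂, rfl⟩ := Submodule.mem_sup.1 hy
  have hj : ⁅k₁, j₂⁆ + ⁅j₁, k₂ + j₂⁆ ∈ (J : Submodule R L) :=
    add_mem (J.lie_mem hj₂) (by rw [← lie_skew]; exact neg_mem (J.lie_mem hj₁))
  have hsplit : ⁅k₁ + j₁, k₂ + j₂⁆ = ⁅k₁, k₂⁆ + (⁅k₁, j₂⁆ + ⁅j₁, k₂ + j₂⁆) := by
    rw [add_lie, lie_add, add_assoc]
  rw [hsplit]
  exact Submodule.add_mem_sup (K.lie_mem hk₁ hk₂) hj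

def supLieIdeal (K : LieSubalgebra R L) (J : LieIdeal R L) : LieSubalgebra R L where
  toSubmodule := K.toSubmodule ⊔ (J : Submodule R L)
  lie_mem' := K.lie_mem_sup_lieIdeal J

lemma lowerCentralSeries_one_le_sup_succ (K : LieSubalgebra R L) {n : ℕ}
    (hn : K.toSubmodule ⊔ (lowerCentralSeries R L L n).toSubmodule = ⊤) :
    (lowerCentralSeries R L L 1).toSubmodule ≤
      K.toSubmodule ⊔ (lowerCentralSeries R L L (n + 1)).toSubmodule := by
  rw [lowerCentralSeries_succ, lowerCentralSeries_zero,
    LieSubmodule.lieIdeal_oper_eq_linear_span', Submodule.span_le]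
  rintro _ ⟨a, -, b, -, rfl⟩
  obtain ⟨k₁, hk₁, c₁, hc₁, rfl⟩ := Submodule.mem_sup.1 (hn ▸ Submodule.mem_top (x := a))
  obtain ⟨k₂, hk₂, c₂, hc₂, rfl⟩ := Submodule.mem_sup.1 (hn ▸ Submodule.mem_top (x := b))
  have hc : ⁅k₁, c₂⁆ + ⁅c₁, k₂ + c₂⁆ ∈ lowerCentralSeries R L L (n + 1) := by
    rw [lowerCentralSeries_succ]
    refine add_mem (LieSubmodule.lie_mem_lie (LieSubmodule.mem_top k₁) hc₂) ?_
    rw [LieSubmodule.lie_comm]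
    exact LieSubmodule.lie_mem_lie hc₁ (LieSubmodule.mem_top _)
  have hsplit : ⁅k₁ + c₁, k₂ + c₂⁆ = ⁅k₁, k₂⁆ + (⁅k₁, c₂⁆ + ⁅c₁, k₂ + c₂⁆) := by
    rw [add_lie, lie_add, add_assoc]
  rw [SetLike.mem_coe, hsplit]
  exact Submodule.add_mem_sup (K.lie_mem hk₁ hk₂) hc

lemma sup_lowerCentralSeries_eq_top (K : LieSubalgebra R L)
    (h : K.toSubmodule ⊔ (lowerCentralSeries R L L 1).toSubmodule = ⊤) (n : ℕ) :
    K.toSubmodule ⊔ (lowerCentralSeries R L L n).toSubmodule = ⊤ := by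
  induction n with
  | zero => simp
  | succ n ih =>
    rw [eq_top_iff, ← h]
    exact sup_le le_sup_left (K.lowerCentralSeries_one_le_sup_succ ih)

end LieSubalgebra

lemma LieIdeal.exists_lowerCentralSeries_le {R L : Type*} [CommRing R] [LieRing L]
    [LieAlgebra R L] (I : LieIdeal R L) [LieRing.IsNilpotent (L ⧸ I)] :
    ∃ k, lowerCentralSeries R L L k ≤ I := by
  obtain ⟨k, hk⟩ := IsNilpotent.nilpotent R (L ⧸ I) (L ⧸ I)
  refine ⟨k, (LieSubmodule.Quotient.map_mk'_eq_bot_le _ _).1 (eq_bot_iff.2 ?_)⟩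
  refine (LieModule.map_lowerCentralSeries_le k (LieSubmodule.Quotient.mk' I)).trans_eq ?_
  rw [← LieSubmodule.toSubmodule_inj, coe_lowerCentralSeries_ideal_quot_eq, hk]
  rfl

section Closure

variable {ι L : Type*} [LieRing L] [LieAlgebra ℚ L] (I : ι → LieIdeal ℚ L)

lemma lcsIn_top_one_le :
    lcsIn (⊤ : Submodule ℚ L) 1 ≤ (lowerCentralSeries ℚ L L 1).toSubmodule := by
  refine Submodule.span_le.2 ?_
  rintro _ ⟨a, -, b, -, rfl⟩
  rw [lowerCentralSeries_succ]
  exact LieSubmodule.lie_mem_lie (LieSubmodule.mem_top a) (LieSubmodule.mem_top b)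

lemma encl_le_sup (S : Submodule ℚ L) (α : ι) : encl I S ≤ S ⊔ (I α : Submodule ℚ L) := by
  intro x hx
  obtain ⟨s, hs, hxs⟩ := hx α
  simpa using Submodule.add_mem_sup hs hxs

lemma encl_eq_top_of_forall_sup_eq_top {S : Submodule ℚ L}
    (h : ∀ α, S ⊔ (I α : Submodule ℚ L) = ⊤) : encl I S = ⊤ := by
  refine eq_top_iff.2 fun x _ α => ?_
  obtain ⟨s, hs, j, hj, rfl⟩ := Submodule.mem_sup.1 (h α ▸ Submodule.mem_top (x := x))
  exact ⟨s, hs, by simpa using hj⟩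

end Closure

theorem stmt10_general {ι L : Type*} [LieRing L] [LieAlgebra ℚ L]
    (I : ι → LieIdeal ℚ L) (hE : IsEnriched I)
    (E : LieSubalgebra ℚ L)
    (h : E.toSubmodule ⊔ encl I (lcsIn (⊤ : Submodule ℚ L) 1) = ⊤) :
    encl I E.toSubmodule = ⊤ := by
  refine encl_eq_top_of_forall_sup_eq_top I fun α => ?_
  have : LieRing.IsNilpotent (L ⧸ I α) := hE.2.2.1 α
  let K := E.supLieIdeal (I α)
  have hIK : (I α).toSubmodule ≤ K.toSubmodule := le_sup_right
  have hK : K.toSubmodule ⊔ (lowerCentralSeries ℚ L L 1).toSubmodule = ⊤ := by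
    refine eq_top_iff.2 (h ▸ sup_le (le_sup_left.trans le_sup_left) ?_)
    exact (encl_le_sup I _ α).trans (sup_le (lcsIn_top_one_le.trans le_sup_right)
      (hIK.trans le_sup_left))
  obtain ⟨k, hk⟩ := (I α).exists_lowerCentralSeries_le (R := ℚ)
  rw [eq_top_iff, ← K.sup_lowerCentralSeries_eq_top hK k]
  exact sup_le le_rfl (((LieSubmodule.toSubmodule_le_toSubmodule _ _).2 hk).trans hIK)

/-- If `E` is a sub Lie algebra of a complete enriched Lie algebra `L`
with `E + L^{(2)} = L` (where `L^{(2)}` is the closure of `[L,L]`), then the closure of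
`E` is all of `L`. -/
theorem stmt10 {ι L : Type*} [LieRing L] [LieAlgebra ℚ L]
    (I : ι → LieIdeal ℚ L) (hE : IsEnriched I) (hC : IsCompleteWrt I)
    (E : LieSubalgebra ℚ L)
    (h : E.toSubmodule ⊔ encl I (lcsIn (⊤ : Submodule ℚ L) 1) = ⊤) :
    encl I E.toSubmodule = ⊤ :=
  stmt10_general I hE E h
end
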